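/- arXiv:1910.00359 — 3 statements merged into one kernel-verified Lean document; each statement's English description precedes it below -/
import Mathlib

section
/- Let L ≥ 1 and fix layer widths n_0 = m, n_1, …, n_L = n, let s = min_{0 ≤ i ≤ L} n_i, and let 0 ≤ r ≤ s. For every affine function G(x) = A x + b with rank(A) = r and every finite subset Ω ⊂ ℝ^m, there exists a parameter vector φ such that F_φ(x) = G(x) for all x ∈ Ω; that is, the family of L-layer ReLU MLPs with these widths has rank-r affine expression for every r ≤ s. -/
open Matrix

/-- Post-activation values of a ReLU MLP with layer widths `n 0, n 1, …`:
`act n A b x k` is the vector fed as input to layer `k+1`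
(`act 0 = x`, and `act (k+1) = ReLU(A_k ⬝ act k + b_k)` componentwise). -/
noncomputable def act (n : ℕ → ℕ)
    (A : ∀ i : ℕ, Matrix (Fin (n (i + 1))) (Fin (n i)) ℝ)
    (b : ∀ i : ℕ, Fin (n (i + 1)) → ℝ)
    (x : Fin (n 0) → ℝ) : (k : ℕ) → Fin (n k) → ℝ
  | 0 => x
  | k + 1 => fun j => max ((A k).mulVec (act n A b x k) j + b k j) 0

/-- The `k`-th preactivation vector `H_{k+1}(act k) = A_k ⬝ act k + b_k`
(the input of the `(k+1)`-st ReLU when `k + 1` is not the last layer). -/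
noncomputable def preact (n : ℕ → ℕ)
    (A : ∀ i : ℕ, Matrix (Fin (n (i + 1))) (Fin (n i)) ℝ)
    (b : ∀ i : ℕ, Fin (n (i + 1)) → ℝ)
    (x : Fin (n 0) → ℝ) (k : ℕ) : Fin (n (k + 1)) → ℝ :=
  fun j => (A k).mulVec (act n A b x k) j + b k j

/-- Output of the `(K+1)`-layer ReLU MLP
`F_φ(x) = H_{K+1}(f(H_K(⋯f(H_1(x))⋯)))` (no ReLU after the last affine layer). -/
noncomputable def mlp (n : ℕ → ℕ)
    (A : ∀ i : ℕ, Matrix (Fin (n (i + 1))) (Fin (n i)) ℝ)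
    (b : ∀ i : ℕ, Fin (n (i + 1)) → ℝ)
    (K : ℕ) (x : Fin (n 0) → ℝ) : Fin (n (K + 1)) → ℝ :=
  preact n A b x K

/-! Factor `A = P * Q` through `ℝ^r`. On the finite set `Ω` the vectors `Q x` are bounded below,
so after adding a constant `M` they are nonnegative; zero-padded into a hidden layer of width
`≥ r`, they pass every ReLU unchanged, and the last layer applies `P` and removes the shift.
The network is built by induction on its depth, appending one layer at a time. -/

theorem Matrix.exists_eq_mul_of_rank_eq {K m n : Type*} [Field K] [Fintype m] [Fintype n]
    [DecidableEq n] (A : Matrix m n K) {r : ℕ} (h : A.rank = r) :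
    ∃ (P : Matrix m (Fin r) K) (Q : Matrix (Fin r) n K), A = P * Q := by
  let B := Module.finBasisOfFinrankEq K (LinearMap.range A.mulVecLin) h
  refine ⟨LinearMap.toMatrix'
      ((LinearMap.range A.mulVecLin).subtype ∘ₗ B.equivFun.symm.toLinearMap),
    LinearMap.toMatrix' (B.equivFun.toLinearMap ∘ₗ A.mulVecLin.rangeRestrict), ?_⟩
  rw [← LinearMap.toMatrix'_comp, LinearMap.comp_assoc,
    ← LinearMap.comp_assoc _ B.equivFun.toLinearMap]
  simp only [LinearEquiv.comp_coe, LinearEquiv.self_trans_symm, LinearEquiv.refl_toLinearMap,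
    LinearMap.id_comp, LinearMap.subtype_comp_codRestrict]
  exact (LinearMap.toMatrix'_toLin' A).symm

section ZeroPadding

variable {R ι κ : Type*} [DecidableEq κ]

theorem Matrix.transpose_one_submatrix_mul_self [Fintype κ] [NonAssocSemiring R]
    [DecidableEq ι] (e : ι ↪ κ) :
    ((1 : Matrix κ κ R).submatrix id e)ᵀ * (1 : Matrix κ κ R).submatrix id e = 1 := by
  rw [transpose_submatrix, transpose_one, ← submatrix_mul _ _ _ _ _ Function.bijective_id,
    Matrix.mul_one, submatrix_one_embedding]

theorem Matrix.one_submatrix_mulVec_nonneg [Fintype ι] [Semiring R] [PartialOrder R]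
    [IsOrderedRing R] (e : ι ↪ κ) {u : ι → R} (hu : 0 ≤ u) :
    0 ≤ (1 : Matrix κ κ R).submatrix id e *ᵥ u := fun i =>
  Finset.sum_nonneg fun j _ => mul_nonneg (by
    simp only [submatrix_apply, one_apply]
    split_ifs <;> simp) (hu j)

end ZeroPadding

theorem Finset.exists_add_const_nonneg {X ι : Type*} [Fintype ι] (Ω : Finset X)
    (f : X → ι → ℝ) :
    ∃ M : ℝ, ∀ x ∈ Ω, 0 ≤ f x + Function.const ι M := by
  obtain ⟨m, hm⟩ := ((Ω ×ˢ Finset.univ).image fun p : X × ι => f p.1 p.2).bddBelow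
  refine ⟨-m, fun x hx j => ?_⟩
  have := hm (Finset.mem_coe.2
    (Finset.mem_image_of_mem _ (Finset.mk_mem_product hx (Finset.mem_univ j))))
  simp only [Pi.zero_apply, Pi.add_apply, Function.const_apply]
  linarith

section MLP

variable {n : ℕ → ℕ} {W W' : ∀ i : ℕ, Matrix (Fin (n (i + 1))) (Fin (n i)) ℝ}
  {c c' : ∀ i : ℕ, Fin (n (i + 1)) → ℝ} {x : Fin (n 0) → ℝ}

theorem act_congr {k : ℕ} (hW : ∀ i < k, W i = W' i) (hc : ∀ i < k, c i = c' i) :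
    act n W c x k = act n W' c' x k := by
  induction k with
  | zero => rfl
  | succ k ih =>
    funext j
    simp only [act, hW k k.lt_succ_self, hc k k.lt_succ_self,
      ih (fun i hi => hW i (hi.trans k.lt_succ_self))
        (fun i hi => hc i (hi.trans k.lt_succ_self))]

theorem act_succ_of_nonneg {k : ℕ} (h : 0 ≤ preact n W c x k) :
    act n W c x (k + 1) = preact n W c x k :=
  funext fun j => max_eq_left (h j)

theorem preact_eq (k : ℕ) : preact n W c x k = W k *ᵥ act n W c x k + c k := rfl

end MLP

theorem exists_mlp_eq_mulVec_mulVec_add (n : ℕ → ℕ) (K r : ℕ)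
    (hn : ∀ i < K, r ≤ n (i + 1)) (Ω : Finset (Fin (n 0) → ℝ))
    (P : Matrix (Fin (n (K + 1))) (Fin r) ℝ)
    (Q : Matrix (Fin r) (Fin (n 0)) ℝ) (d : Fin (n (K + 1)) → ℝ) :
    ∃ (W : ∀ i : ℕ, Matrix (Fin (n (i + 1))) (Fin (n i)) ℝ)
      (c : ∀ i : ℕ, Fin (n (i + 1)) → ℝ),
      ∀ x ∈ Ω, mlp n W c K x = P *ᵥ (Q *ᵥ x) + d := by
  induction K with
  | zero =>
    refine ⟨Function.update 0 0 (P * Q), Function.update 0 0 d, fun x _ => ?_⟩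
    simp [mlp, preact_eq, act, mulVec_mulVec]
  | succ K ih =>
    obtain ⟨M, hM⟩ := Ω.exists_add_const_nonneg fun x => Q *ᵥ x
    set E : Matrix (Fin (n (K + 1))) (Fin r) ℝ :=
      (1 : Matrix _ _ ℝ).submatrix id (Fin.castLEEmb (hn K K.lt_succ_self))
    obtain ⟨W, c, hWc⟩ :=
      ih (fun i hi => hn i (hi.trans K.lt_succ_self)) E (E *ᵥ Function.const _ M)
    refine ⟨Function.update W (K + 1) (P * Eᵀ),
      Function.update c (K + 1) (d - P *ᵥ Function.const _ M), fun x hx => ?_⟩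
    have hidden : act n (Function.update W (K + 1) (P * Eᵀ))
        (Function.update c (K + 1) (d - P *ᵥ Function.const _ M)) x (K + 1)
          = E *ᵥ (Q *ᵥ x + Function.const _ M) := by
      rw [act_congr (W' := W) (c' := c) (fun i hi => Function.update_of_ne hi.ne _ _)
        (fun i hi => Function.update_of_ne hi.ne _ _)]
      have hpre : preact n W c x K = E *ᵥ (Q *ᵥ x + Function.const _ M) := by
        rw [mulVec_add]
        exact hWc x hx
      rw [act_succ_of_nonneg (hpre ▸ one_submatrix_mulVec_nonneg _ (hM x hx)), hpre]
    rw [mlp, preact_eq, hidden, Function.update_self, Function.update_self, ← mulVec_mulVec,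
      mulVec_mulVec _ Eᵀ, transpose_one_submatrix_mul_self, one_mulVec, mulVec_add]
    abel

/-- The family of `(K+1)`-layer ReLU MLPs with widths `n 0, …, n (K+1)`
has rank-`r` affine expression for every `r ≤ s = min_{0 ≤ i ≤ K+1} n i`. -/
theorem rank_le_s_affine_expression (n : ℕ → ℕ) (K : ℕ) (r : ℕ)
    (hr : r ≤ (Finset.range (K + 2)).inf' (by simp) n)
    (A : Matrix (Fin (n (K + 1))) (Fin (n 0)) ℝ) (bb : Fin (n (K + 1)) → ℝ)
    (hrank : A.rank = r)
    (Ω : Finset (Fin (n 0) → ℝ)) :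
    ∃ (W : ∀ i : ℕ, Matrix (Fin (n (i + 1))) (Fin (n i)) ℝ)
      (c : ∀ i : ℕ, Fin (n (i + 1)) → ℝ),
      ∀ x ∈ Ω, mlp n W c K x = A.mulVec x + bb := by
  have hidden_width : ∀ i < K, r ≤ n (i + 1) := fun i hi =>
    hr.trans (Finset.inf'_le n (Finset.mem_range.2 (by omega)))
  obtain ⟨P, Q, rfl⟩ := A.exists_eq_mul_of_rank_eq hrank
  simpa only [← mulVec_mulVec] using exists_mlp_eq_mulVec_mulVec_add n K r hidden_width Ω P Q bb
end

section
/- Let L ≥ 1 and fix layer widths n_0 = m, n_1, …, n_L = n with n_i ≥ min(m, n) for all i. Then the family of L-layer ReLU MLPs with these widths has full affine expression: for every affine function G : ℝ^m → ℝ^n, G(x) = A x + b (with A of arbitrary rank), and every finite subset Ω ⊂ ℝ^m, there exists a parameter vector φ with F_φ(x) = G(x) for all x ∈ Ω. -/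
open Matrix

/-!
Factor `A = P Q` through `ℝ^r` with `r = min m n`. On the finite set `Ω` the vectors `Q x` are
bounded below, so after a shift `s` they are nonnegative, and a nonnegative vector of `ℝ^r`,
zero-padded to any width `n_i ≥ r`, passes through a ReLU unchanged. The network therefore
computes `Q x + s` in its first layer, carries it unchanged through the hidden layers, and
outputs `P (Q x + s) + (b - P s) = A x + b`.
-/

theorem Matrix.exists_mul_eq_through_min {R : Type*} [Semiring R] {m n : ℕ}
    (A : Matrix (Fin n) (Fin m) R) :
    ∃ (P : Matrix (Fin n) (Fin (min m n)) R) (Q : Matrix (Fin (min m n)) (Fin m) R),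
      P * Q = A := by
  rcases le_total m n with h | h
  · have e : Fin (min m n) ≃ Fin m := finCongr (min_eq_left h)
    refine ⟨A.submatrix id e, (1 : Matrix (Fin m) (Fin m) R).submatrix e id, ?_⟩
    rw [submatrix_mul_equiv, Matrix.mul_one, submatrix_id_id]
  · have e : Fin (min m n) ≃ Fin n := finCongr (min_eq_right h)
    refine ⟨(1 : Matrix (Fin n) (Fin n) R).submatrix id e, A.submatrix e id, ?_⟩
    rw [submatrix_mul_equiv, Matrix.one_mul, submatrix_id_id]

theorem Matrix.mulVec_nonneg {R ι κ : Type*} [Semiring R] [PartialOrder R] [IsOrderedRing R]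
    [Fintype κ] {M : Matrix ι κ R} (hM : ∀ i, 0 ≤ M i) {v : κ → R} (hv : 0 ≤ v) :
    0 ≤ M *ᵥ v :=
  fun i => dotProduct_nonneg_of_nonneg (hM i) hv

theorem Finset.exists_add_nonneg {ι E : Type*} [AddCommGroup E] [Lattice E]
    [IsOrderedAddMonoid E] (Ω : Finset ι) (f : ι → E) :
    ∃ s : E, ∀ x ∈ Ω, 0 ≤ f x + s := by
  refine ⟨∑ y ∈ Ω, |f y|, fun x hx => ?_⟩
  calc 0 ≤ f x + |f x| := neg_le_iff_add_nonneg'.1 (neg_le_abs (f x))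
    _ ≤ f x + ∑ y ∈ Ω, |f y| := by
      gcongr
      exact Finset.single_le_sum (fun y _ => abs_nonneg (f y)) hx

def padding (R : Type*) [Zero R] [One R] (N r : ℕ) : Matrix (Fin N) (Fin r) R :=
  Matrix.of fun j k => if (j : ℕ) = k then 1 else 0

theorem padding_nonneg {R : Type*} [Zero R] [One R] [PartialOrder R] [ZeroLEOneClass R]
    (N r : ℕ) (j : Fin N) : 0 ≤ padding R N r j := by
  intro k
  simp only [padding, of_apply, Pi.zero_apply]
  split_ifs <;> simp

theorem padding_transpose_mul_padding {R : Type*} [Semiring R] {N r : ℕ} (h : r ≤ N) :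
    (padding R N r)ᵀ * padding R N r = 1 := by
  ext k k'
  have hk' : ∀ j : Fin N, (j : ℕ) = k' ↔ j = Fin.castLE h k' := fun j => by simp [Fin.ext_iff]
  simp [padding, Matrix.mul_apply, Matrix.one_apply, hk', eq_comm, Fin.val_inj]

theorem act_zero (n : ℕ → ℕ) (A : ∀ i : ℕ, Matrix (Fin (n (i + 1))) (Fin (n i)) ℝ)
    (b : ∀ i : ℕ, Fin (n (i + 1)) → ℝ) (x : Fin (n 0) → ℝ) : act n A b x 0 = x :=
  rfl

theorem act_succ (n : ℕ → ℕ) (A : ∀ i : ℕ, Matrix (Fin (n (i + 1))) (Fin (n i)) ℝ)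
    (b : ∀ i : ℕ, Fin (n (i + 1)) → ℝ) (x : Fin (n 0) → ℝ) (k : ℕ) :
    act n A b x (k + 1) = (A k *ᵥ act n A b x k + b k) ⊔ 0 :=
  rfl

theorem mlp_eq (n : ℕ → ℕ) (A : ∀ i : ℕ, Matrix (Fin (n (i + 1))) (Fin (n i)) ℝ)
    (b : ∀ i : ℕ, Fin (n (i + 1)) → ℝ) (K : ℕ) (x : Fin (n 0) → ℝ) :
    mlp n A b K x = A K *ᵥ act n A b x K + b K :=
  rfl

noncomputable def paddedWeights (n : ℕ → ℕ) (K : ℕ) {r : ℕ}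
    (P : Matrix (Fin (n (K + 2))) (Fin r) ℝ) (Q : Matrix (Fin r) (Fin (n 0)) ℝ) :
    ∀ i : ℕ, Matrix (Fin (n (i + 1))) (Fin (n i)) ℝ :=
  Function.update
    (Function.update (fun _ => padding ℝ _ r * (padding ℝ _ r)ᵀ) 0 (padding ℝ _ r * Q))
    (K + 1) (P * (padding ℝ _ r)ᵀ)

noncomputable def paddedBiases (n : ℕ → ℕ) (K : ℕ) {r : ℕ}
    (P : Matrix (Fin (n (K + 2))) (Fin r) ℝ) (s : Fin r → ℝ) (b : Fin (n (K + 2)) → ℝ) :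
    ∀ i : ℕ, Fin (n (i + 1)) → ℝ :=
  Function.update (Function.update 0 0 (padding ℝ _ r *ᵥ s)) (K + 1) (b - P *ᵥ s)

section PaddedNetwork

variable {n : ℕ → ℕ} {K r : ℕ} {P : Matrix (Fin (n (K + 2))) (Fin r) ℝ}
  {Q : Matrix (Fin r) (Fin (n 0)) ℝ} {s : Fin r → ℝ} {b : Fin (n (K + 2)) → ℝ}
  {x : Fin (n 0) → ℝ}

theorem act_paddedWeights (hr : ∀ i ≤ K, r ≤ n (i + 1)) (hx : 0 ≤ Q *ᵥ x + s) :
    ∀ i ≤ K, act n (paddedWeights n K P Q) (paddedBiases n K P s b) x (i + 1)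
      = padding ℝ (n (i + 1)) r *ᵥ (Q *ᵥ x + s) := by
  have relu_id : ∀ N,
      (padding ℝ N r *ᵥ (Q *ᵥ x + s)) ⊔ 0 = padding ℝ N r *ᵥ (Q *ᵥ x + s) :=
    fun N => sup_eq_left.2 (mulVec_nonneg (padding_nonneg N r) hx)
  intro i hi
  induction i with
  | zero =>
    simp only [act_succ, act_zero, paddedWeights, paddedBiases,
      Function.update_of_ne (Nat.succ_ne_zero K).symm, Function.update_self]
    rw [← mulVec_mulVec, ← mulVec_add, relu_id]
  | succ i ih =>
    have hmid : i + 1 ≠ K + 1 := by omega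
    rw [act_succ, ih (by omega), paddedWeights, paddedBiases, Function.update_of_ne hmid,
      Function.update_of_ne hmid, Function.update_of_ne i.succ_ne_zero,
      Function.update_of_ne i.succ_ne_zero, Pi.zero_apply, add_zero, mulVec_mulVec,
      Matrix.mul_assoc, padding_transpose_mul_padding (hr i (by omega)), Matrix.mul_one, relu_id]

theorem mlp_paddedWeights (hr : ∀ i ≤ K, r ≤ n (i + 1)) (hx : 0 ≤ Q *ᵥ x + s) :
    mlp n (paddedWeights n K P Q) (paddedBiases n K P s b) (K + 1) x = (P * Q) *ᵥ x + b := by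
  rw [mlp_eq, act_paddedWeights hr hx K le_rfl]
  simp only [paddedWeights, paddedBiases, Function.update_self]
  rw [mulVec_mulVec, Matrix.mul_assoc, padding_transpose_mul_padding (hr K le_rfl),
    Matrix.mul_one, mulVec_add, ← mulVec_mulVec]
  abel

end PaddedNetwork

/-- If all layer widths are at least `min(m, n) = min (n 0) (n (K+1))`,
the family of `(K+1)`-layer ReLU MLPs has full affine expression: every affine function
`G(x) = A x + b` (of arbitrary rank) can be matched exactly on any finite set `Ω`. -/
theorem full_affine_expression (n : ℕ → ℕ) (K : ℕ)
    (hwide : ∀ i ≤ K + 1, min (n 0) (n (K + 1)) ≤ n i)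
    (A : Matrix (Fin (n (K + 1))) (Fin (n 0)) ℝ) (bb : Fin (n (K + 1)) → ℝ)
    (Ω : Finset (Fin (n 0) → ℝ)) :
    ∃ (W : ∀ i : ℕ, Matrix (Fin (n (i + 1))) (Fin (n i)) ℝ)
      (c : ∀ i : ℕ, Fin (n (i + 1)) → ℝ),
      ∀ x ∈ Ω, mlp n W c K x = A.mulVec x + bb := by
  cases K with
  | zero => exact ⟨Function.update 0 0 A, Function.update 0 0 bb, fun x _ => by
      simp [mlp_eq, act_zero]⟩
  | succ K =>
    obtain ⟨P, Q, rfl⟩ := A.exists_mul_eq_through_min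
    obtain ⟨s, hs⟩ := Ω.exists_add_nonneg (Q *ᵥ ·)
    exact ⟨paddedWeights n K P Q, paddedBiases n K P s bb, fun x hx =>
      mlp_paddedWeights (fun i hi => hwide (i + 1) (by omega)) (hs x hx)⟩
end

section
/- Consider a training set {(x_i, y_i)}_{i=1}^N with x_i ∈ ℝ^m, a family of L-layer ReLU MLPs F_φ : ℝ^m → ℝ^n with layer widths n_0 = m, n_1, …, n_L = n, s = min_{0 ≤ i ≤ L} n_i, a continuous ℓ : (ℝ^n)^N → ℝ, L_aff(A, b) = ℓ(A x_1 + b, …, A x_N + b), and L_MLP(φ) = ℓ(F_φ(x_1), …, F_φ(x_N)). Suppose (A', b') with rank(A') ≤ s is a local minimum of L_aff subject to rank(A) ≤ s, and suppose moreover that L_aff(A', b') > inf_φ L_MLP(φ). Then L_MLP possesses a suboptimal local minimum: there exists φ' that is a local minimum of L_MLP with L_MLP(φ') = L_aff(A', b') strictly greater than the infimum of L_MLP, hence φ' is a local but not global minimum. -/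
open Matrix

/-- Euclidean distance between the parameter vectors `(A, b)` and `(A', b')` of a
`(K+1)`-layer MLP, i.e. the Euclidean norm of the concatenation of all entries of the
differences of the weight matrices and bias vectors of layers `1, …, K+1`. -/
noncomputable def paramDist (n : ℕ → ℕ) (K : ℕ)
    (A A' : ∀ i : ℕ, Matrix (Fin (n (i + 1))) (Fin (n i)) ℝ)
    (b b' : ∀ i : ℕ, Fin (n (i + 1)) → ℝ) : ℝ :=
  Real.sqrt (∑ i ∈ Finset.range (K + 1),
    ((∑ j, ∑ k, (A i j k - A' i j k) ^ 2) + ∑ j, (b i j - b' i j) ^ 2))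

/-- Frobenius (Euclidean) norm of a matrix. -/
noncomputable def matNorm {p q : ℕ} (M : Matrix (Fin p) (Fin q) ℝ) : ℝ :=
  Real.sqrt (∑ j, ∑ k, (M j k) ^ 2)

/-- Euclidean norm of a vector. -/
noncomputable def vecNorm {p : ℕ} (v : Fin p → ℝ) : ℝ :=
  Real.sqrt (∑ j, (v j) ^ 2)

/-!
Factor `A' = B * C` through `ℝ^r` with `r = rank A' ≤ s`, and realize `y ↦ A' y + b'` by a network
whose first layer is `C`, whose hidden layers carry `ℝ^r` in their first `r` coordinates and whose
last layer is `B`. The biases shift every hidden unit by a constant `t`, chosen so large that all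
hidden ReLUs are strictly active on the training inputs. Strict activity is an open condition, so
near these parameters the network is the affine map with weight `A_K ⋯ A_0`, of rank at most `s`,
and with weight and bias close to `(A', b')`. Local minimality of `(A', b')` under the rank
constraint therefore makes the parameters a local minimum of `L_MLP`, with value `L_aff(A', b')`.
-/

open Filter Topology

theorem Matrix.exists_eq_mul_of_rank {K m n : Type*} [Field K] [Fintype m] [Fintype n]
    [DecidableEq n] (M : Matrix m n K) :
    ∃ (B : Matrix m (Fin M.rank) K) (C : Matrix (Fin M.rank) n K), M = B * C := by
  let V := LinearMap.range M.mulVecLin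
  let e : V ≃ₗ[K] (Fin M.rank → K) :=
    LinearEquiv.ofFinrankEq _ _ (Module.finrank_fin_fun K).symm
  refine ⟨LinearMap.toMatrix' (V.subtype ∘ₗ e.symm.toLinearMap),
    LinearMap.toMatrix' (e.toLinearMap ∘ₗ M.mulVecLin.rangeRestrict), ?_⟩
  rw [← LinearMap.toMatrix'_comp, LinearMap.comp_assoc,
    ← LinearMap.comp_assoc _ _ e.symm.toLinearMap, LinearEquiv.symm_comp, LinearMap.id_comp,
    LinearMap.subtype_comp_codRestrict]
  exact (LinearMap.toMatrix'_toLin' M).symm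

def Matrix.padOne (R : Type*) [Zero R] [One R] (m r : ℕ) : Matrix (Fin m) (Fin r) R :=
  Matrix.of fun a t => if (a : ℕ) = t then 1 else 0

theorem Matrix.padOne_mul_padOne {R : Type*} [Semiring R] {m r : ℕ} (h : r ≤ m) :
    padOne R r m * padOne R m r = 1 := by
  ext i j
  rw [mul_apply, Fintype.sum_eq_single (Fin.castLE h i)]
  · simp [padOne, one_apply, Fin.ext_iff]
  · intro a ha
    have hia : (i : ℕ) ≠ a := fun hia => ha (Fin.ext hia.symm)
    simp [padOne, hia]

theorem Filter.Tendsto.matrix_mulVec {α R m n : Type*} [TopologicalSpace R]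
    [NonUnitalNonAssocSemiring R] [ContinuousAdd R] [ContinuousMul R] [Fintype n]
    {F : Filter α} {f : α → Matrix m n R} {g : α → n → R} {M : Matrix m n R} {v : n → R}
    (hf : Tendsto f F (𝓝 M)) (hg : Tendsto g F (𝓝 v)) :
    Tendsto (fun a => f a *ᵥ g a) F (𝓝 (M *ᵥ v)) :=
  ((continuous_fst.matrix_mulVec continuous_snd).tendsto (M, v)).comp (hf.prodMk_nhds hg)

theorem Filter.Tendsto.matrix_mul {α R l m n : Type*} [TopologicalSpace R]
    [Mul R] [AddCommMonoid R] [ContinuousAdd R] [ContinuousMul R] [Fintype m]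
    {F : Filter α} {f : α → Matrix l m R} {g : α → Matrix m n R} {M : Matrix l m R}
    {N : Matrix m n R} (hf : Tendsto f F (𝓝 M)) (hg : Tendsto g F (𝓝 N)) :
    Tendsto (fun a => f a * g a) F (𝓝 (M * N)) :=
  ((continuous_fst.matrix_mul continuous_snd).tendsto (M, N)).comp (hf.prodMk_nhds hg)

abbrev Weights (n : ℕ → ℕ) : Type := ∀ i : ℕ, Matrix (Fin (n (i + 1))) (Fin (n i)) ℝ

abbrev Biases (n : ℕ → ℕ) : Type := ∀ i : ℕ, Fin (n (i + 1)) → ℝ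

section Network

variable {n : ℕ → ℕ}

/-- Layers `0, …, k` collapse to `y ↦ collapsedWeight A k *ᵥ y + collapsedBias A b k` when every
ReLU acts as the identity. -/
noncomputable def collapsedWeight (A : Weights n) :
    (k : ℕ) → Matrix (Fin (n (k + 1))) (Fin (n 0)) ℝ
  | 0 => A 0
  | k + 1 => A (k + 1) * collapsedWeight A k

noncomputable def collapsedBias (A : Weights n) (b : Biases n) : (k : ℕ) → Fin (n (k + 1)) → ℝ
  | 0 => b 0
  | k + 1 => A (k + 1) *ᵥ collapsedBias A b k + b (k + 1)

def AllActive (A : Weights n) (b : Biases n) (K : ℕ) (y : Fin (n 0) → ℝ) : Prop :=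
  ∀ k < K, ∀ j, 0 < preact n A b y k j

theorem preact_eq_s5 (A : Weights n) (b : Biases n) (y : Fin (n 0) → ℝ) (k : ℕ) :
    preact n A b y k = A k *ᵥ act n A b y k + b k :=
  rfl

theorem act_succ_eq_preact {A : Weights n} {b : Biases n} {y : Fin (n 0) → ℝ} {k : ℕ}
    (h : ∀ j, 0 ≤ preact n A b y k j) : act n A b y (k + 1) = preact n A b y k :=
  funext fun j => max_eq_left (h j)

theorem preact_eq_collapsed (A : Weights n) (b : Biases n) (y : Fin (n 0) → ℝ) :
    ∀ k, (∀ k' < k, ∀ j, 0 ≤ preact n A b y k' j) →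
      preact n A b y k = collapsedWeight A k *ᵥ y + collapsedBias A b k
  | 0, _ => rfl
  | k + 1, h => by
    rw [preact_eq_s5, act_succ_eq_preact (h k k.lt_succ_self),
      preact_eq_collapsed A b y k fun k' hk' => h k' (hk'.trans k.lt_succ_self),
      mulVec_add, mulVec_mulVec]
    exact add_assoc _ _ _

theorem mlp_eq_collapsed {A : Weights n} {b : Biases n} {K : ℕ} {y : Fin (n 0) → ℝ}
    (h : AllActive A b K y) : mlp n A b K y = collapsedWeight A K *ᵥ y + collapsedBias A b K :=
  preact_eq_collapsed A b y K fun k hk j => (h k hk j).le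

theorem allActive_of_collapsed_pos {A : Weights n} {b : Biases n} {K : ℕ} {y : Fin (n 0) → ℝ}
    (h : ∀ k < K, ∀ j, 0 < (collapsedWeight A k *ᵥ y + collapsedBias A b k) j) :
    AllActive A b K y := by
  intro k
  induction k using Nat.strong_induction_on with
  | _ k ih =>
    intro hk
    rw [preact_eq_collapsed A b y k fun k' hk' j => (ih k' hk' (hk'.trans hk) j).le]
    exact h k hk

theorem rank_collapsedWeight_le (A : Weights n) :
    ∀ k, ∀ i ≤ k + 1, (collapsedWeight A k).rank ≤ n i
  | 0, i, hi => by
    interval_cases i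
    exacts [rank_le_width _, rank_le_height _]
  | k + 1, i, hi => by
    rcases hi.eq_or_lt with rfl | hi
    · exact rank_le_height _
    · exact (rank_mul_le_right _ _).trans (rank_collapsedWeight_le A k i (by omega))

theorem collapsedWeight_telescope {r : ℕ} (U : ∀ i, Matrix (Fin (n i)) (Fin r) ℝ)
    (V : ∀ i, Matrix (Fin r) (Fin (n i)) ℝ) :
    ∀ k, (∀ i, 0 < i → i ≤ k → V i * U i = 1) →
      collapsedWeight (fun i => U (i + 1) * V i) k = U (k + 1) * V 0
  | 0, _ => rfl
  | k + 1, h => by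
    change U (k + 2) * V (k + 1) * collapsedWeight _ k = _
    rw [collapsedWeight_telescope U V k fun i hi hik => h i hi (hik.trans k.le_succ),
      Matrix.mul_assoc, ← Matrix.mul_assoc (V (k + 1)), h (k + 1) k.succ_pos le_rfl,
      Matrix.one_mul]

noncomputable def biasOfCollapsed (A : Weights n) (β : Biases n) : Biases n
  | 0 => β 0
  | k + 1 => β (k + 1) - A (k + 1) *ᵥ β k

theorem collapsedBias_biasOfCollapsed (A : Weights n) (β : Biases n) :
    ∀ k, collapsedBias A (biasOfCollapsed A β) k = β k
  | 0 => rfl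
  | k + 1 => by
    rw [collapsedBias, collapsedBias_biasOfCollapsed A β k, biasOfCollapsed, add_sub_cancel]

theorem exists_allActive_collapsed_eq {K N : ℕ} (x : Fin N → Fin (n 0) → ℝ)
    (A' : Matrix (Fin (n (K + 1))) (Fin (n 0)) ℝ) (b' : Fin (n (K + 1)) → ℝ)
    (hrank : ∀ i ≤ K + 1, A'.rank ≤ n i) :
    ∃ (W : Weights n) (c : Biases n), collapsedWeight W K = A' ∧ collapsedBias W c K = b' ∧
      ∀ i, AllActive W c K (x i) := by
  obtain ⟨B, C, hBC⟩ := A'.exists_eq_mul_of_rank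
  let U : ∀ i, Matrix (Fin (n i)) (Fin A'.rank) ℝ :=
    Function.update (fun i => padOne ℝ (n i) A'.rank) (K + 1) B
  let V : ∀ i, Matrix (Fin A'.rank) (Fin (n i)) ℝ :=
    Function.update (fun i => padOne ℝ A'.rank (n i)) 0 C
  let W : Weights n := fun i => U (i + 1) * V i
  have hW : collapsedWeight W K = A' := by
    rw [collapsedWeight_telescope U V K fun i hi hiK => ?_]
    · simp only [U, V, Function.update_self, hBC]
    · simp only [U, V, Function.update_of_ne (by omega : i ≠ K + 1),
        Function.update_of_ne hi.ne']
      exact padOne_mul_padOne (hrank i (by omega))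
  obtain ⟨t, ht⟩ := Finite.exists_le fun p : Fin N × Σ k : Fin K, Fin (n (k + 1)) =>
    -(collapsedWeight W p.2.1 *ᵥ x p.1) p.2.2
  let β : Biases n := Function.update (fun _ _ => t + 1) K b'
  refine ⟨W, biasOfCollapsed W β, hW, ?_, fun i => allActive_of_collapsed_pos fun k hk j => ?_⟩
  · exact (collapsedBias_biasOfCollapsed W β K).trans (Function.update_self ..)
  · have htk := ht (i, ⟨⟨k, hk⟩, j⟩)
    rw [collapsedBias_biasOfCollapsed]
    simp only [β, Function.update_of_ne hk.ne, Pi.add_apply] at htk ⊢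
    linarith

end Network

section Continuity

variable {n : ℕ → ℕ} {α : Type*} {F : Filter α} {A : α → Weights n} {b : α → Biases n}
  {A₀ : Weights n} {b₀ : Biases n}

theorem tendsto_act (y : Fin (n 0) → ℝ) :
    ∀ k, (∀ i < k, Tendsto (fun a => A a i) F (𝓝 (A₀ i))) →
      (∀ i < k, Tendsto (fun a => b a i) F (𝓝 (b₀ i))) →
      Tendsto (fun a => act n (A a) (b a) y k) F (𝓝 (act n A₀ b₀ y k))
  | 0, _, _ => tendsto_const_nhds
  | k + 1, hA, hb => by
    have hpre := ((hA k k.lt_succ_self).matrix_mulVec (tendsto_act y k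
      (fun i hi => hA i (hi.trans k.lt_succ_self)) fun i hi => hb i (hi.trans k.lt_succ_self))).add
      (hb k k.lt_succ_self)
    exact tendsto_pi_nhds.2 fun j => (tendsto_pi_nhds.1 hpre j).max tendsto_const_nhds

theorem tendsto_preact (y : Fin (n 0) → ℝ) {k : ℕ}
    (hA : ∀ i ≤ k, Tendsto (fun a => A a i) F (𝓝 (A₀ i)))
    (hb : ∀ i ≤ k, Tendsto (fun a => b a i) F (𝓝 (b₀ i))) :
    Tendsto (fun a => preact n (A a) (b a) y k) F (𝓝 (preact n A₀ b₀ y k)) :=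
  ((hA k le_rfl).matrix_mulVec
    (tendsto_act y k (fun i hi => hA i hi.le) fun i hi => hb i hi.le)).add (hb k le_rfl)

theorem tendsto_collapsedWeight :
    ∀ k, (∀ i ≤ k, Tendsto (fun a => A a i) F (𝓝 (A₀ i))) →
      Tendsto (fun a => collapsedWeight (A a) k) F (𝓝 (collapsedWeight A₀ k))
  | 0, hA => hA 0 le_rfl
  | k + 1, hA => (hA (k + 1) le_rfl).matrix_mul
      (tendsto_collapsedWeight k fun i hi => hA i (hi.trans k.le_succ))

theorem tendsto_collapsedBias :
    ∀ k, (∀ i ≤ k, Tendsto (fun a => A a i) F (𝓝 (A₀ i))) →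
      (∀ i ≤ k, Tendsto (fun a => b a i) F (𝓝 (b₀ i))) →
      Tendsto (fun a => collapsedBias (A a) (b a) k) F (𝓝 (collapsedBias A₀ b₀ k))
  | 0, _, hb => hb 0 le_rfl
  | k + 1, hA, hb => ((hA (k + 1) le_rfl).matrix_mulVec (tendsto_collapsedBias k
      (fun i hi => hA i (hi.trans k.le_succ)) fun i hi => hb i (hi.trans k.le_succ))).add
      (hb (k + 1) le_rfl)

theorem eventually_allActive {K : ℕ} {y : Fin (n 0) → ℝ}
    (hA : ∀ i ≤ K, Tendsto (fun a => A a i) F (𝓝 (A₀ i)))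
    (hb : ∀ i ≤ K, Tendsto (fun a => b a i) F (𝓝 (b₀ i))) (h : AllActive A₀ b₀ K y) :
    ∀ᶠ a in F, AllActive (A a) (b a) K y :=
  (Set.finite_Iio K).eventually_all.2 fun k hk => eventually_all.2 fun j =>
    (tendsto_pi_nhds.1 (tendsto_preact y (fun i hi => hA i (hi.trans hk.le))
      fun i hi => hb i (hi.trans hk.le)) j).eventually (lt_mem_nhds (h k hk j))

theorem continuous_matNorm {p q : ℕ} : Continuous (matNorm : Matrix (Fin p) (Fin q) ℝ → ℝ) := by
  unfold matNorm
  fun_prop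

theorem continuous_vecNorm {p : ℕ} : Continuous (vecNorm : (Fin p → ℝ) → ℝ) := by
  unfold vecNorm
  fun_prop

theorem matNorm_zero {p q : ℕ} : matNorm (0 : Matrix (Fin p) (Fin q) ℝ) = 0 := by
  simp [matNorm]

theorem vecNorm_zero {p : ℕ} : vecNorm (0 : Fin p → ℝ) = 0 := by
  simp [vecNorm]

theorem eventually_matNorm_add_vecNorm_lt {p q : ℕ} {f : α → Matrix (Fin p) (Fin q) ℝ}
    {g : α → Fin p → ℝ} {M : Matrix (Fin p) (Fin q) ℝ} {v : Fin p → ℝ} {ε : ℝ}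
    (hf : Tendsto f F (𝓝 M)) (hg : Tendsto g F (𝓝 v)) (hε : 0 < ε) :
    ∀ᶠ a in F, matNorm (f a - M) + vecNorm (g a - v) < ε := by
  have h := ((continuous_matNorm.tendsto _).comp (hf.sub_const M)).add
    ((continuous_vecNorm.tendsto _).comp (hg.sub_const v))
  rw [sub_self, sub_self, matNorm_zero, vecNorm_zero, add_zero] at h
  exact h.eventually (gt_mem_nhds hε)

end Continuity

section ParamDist

variable {n : ℕ → ℕ} {K : ℕ} {W W' : Weights n} {c c' : Biases n}

theorem layer_le_paramDist_sq {i : ℕ} (hi : i ≤ K) :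
    (∑ j, ∑ k, (W i j k - W' i j k) ^ 2) + ∑ j, (c i j - c' i j) ^ 2 ≤
      ∑ i ∈ Finset.range (K + 1),
        ((∑ j, ∑ k, (W i j k - W' i j k) ^ 2) + ∑ j, (c i j - c' i j) ^ 2) :=
  Finset.single_le_sum (f := fun i => (∑ j, ∑ k, (W i j k - W' i j k) ^ 2) +
    ∑ j, (c i j - c' i j) ^ 2) (fun _ _ => by positivity) (Finset.mem_range.2 (by omega))

theorem abs_sub_weight_le_paramDist {i : ℕ} (hi : i ≤ K) (j : Fin (n (i + 1))) (k : Fin (n i)) :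
    |W i j k - W' i j k| ≤ paramDist n K W W' c c' := by
  refine Real.abs_le_sqrt ?_
  calc (W i j k - W' i j k) ^ 2 ≤ ∑ k, (W i j k - W' i j k) ^ 2 :=
        Finset.single_le_sum (f := fun k => (W i j k - W' i j k) ^ 2)
          (fun _ _ => sq_nonneg _) (Finset.mem_univ k)
    _ ≤ ∑ j, ∑ k, (W i j k - W' i j k) ^ 2 :=
        Finset.single_le_sum (f := fun j => ∑ k, (W i j k - W' i j k) ^ 2)
          (fun _ _ => by positivity) (Finset.mem_univ j)
    _ ≤ _ := le_add_of_nonneg_right (by positivity)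
    _ ≤ _ := layer_le_paramDist_sq hi

theorem abs_sub_bias_le_paramDist {i : ℕ} (hi : i ≤ K) (j : Fin (n (i + 1))) :
    |c i j - c' i j| ≤ paramDist n K W W' c c' := by
  refine Real.abs_le_sqrt ?_
  calc (c i j - c' i j) ^ 2 ≤ ∑ j, (c i j - c' i j) ^ 2 :=
        Finset.single_le_sum (f := fun j => (c i j - c' i j) ^ 2)
          (fun _ _ => sq_nonneg _) (Finset.mem_univ j)
    _ ≤ _ := le_add_of_nonneg_left (by positivity)
    _ ≤ _ := layer_le_paramDist_sq hi

variable (n K W c) in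
noncomputable def paramNhds : Filter (Weights n × Biases n) :=
  comap (fun p => paramDist n K W p.1 c p.2) (𝓝 0)

theorem tendsto_weight_paramNhds {i : ℕ} (hi : i ≤ K) :
    Tendsto (fun p : Weights n × Biases n => p.1 i) (paramNhds n K W c) (𝓝 (W i)) :=
  tendsto_pi_nhds.2 fun j => tendsto_pi_nhds.2 fun k => tendsto_iff_dist_tendsto_zero.2 <|
    squeeze_zero (fun _ => dist_nonneg)
      (fun _ => (abs_sub_comm _ _).trans_le (abs_sub_weight_le_paramDist hi j k)) tendsto_comap

theorem tendsto_bias_paramNhds {i : ℕ} (hi : i ≤ K) :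
    Tendsto (fun p : Weights n × Biases n => p.2 i) (paramNhds n K W c) (𝓝 (c i)) :=
  tendsto_pi_nhds.2 fun j => tendsto_iff_dist_tendsto_zero.2 <|
    squeeze_zero (fun _ => dist_nonneg)
      (fun _ => (abs_sub_comm _ _).trans_le (abs_sub_bias_le_paramDist hi j)) tendsto_comap

theorem exists_paramDist_lt_of_eventually {P : Weights n → Biases n → Prop}
    (h : ∀ᶠ p in paramNhds n K W c, P p.1 p.2) :
    ∃ δ > 0, ∀ W' c', paramDist n K W W' c c' < δ → P W' c' := by
  obtain ⟨δ, hδ, hP⟩ := (Metric.nhds_basis_ball.comap _).eventually_iff.1 h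
  refine ⟨δ, hδ, fun W' c' hd => hP (?_ : (W', c') ∈ _)⟩
  unfold paramDist at hd ⊢
  rwa [Set.mem_preimage, Metric.mem_ball, Real.dist_0_eq_abs, abs_of_nonneg (Real.sqrt_nonneg _)]

end ParamDist

/-- If `(A', b')` is a local minimum of the rank-`s`-constrained affine
training objective whose value lies strictly above the infimum of the MLP training
objective `L_MLP`, then `L_MLP` possesses a suboptimal local minimum: a local minimum
`(W, c)` whose value equals `L_aff(A', b')` and is strictly above `inf L_MLP`. -/
theorem suboptimal_local_min_exists (n : ℕ → ℕ) (K N : ℕ)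
    (x : Fin N → Fin (n 0) → ℝ)
    (ℓ : (Fin N → Fin (n (K + 1)) → ℝ) → ℝ)
    (A' : Matrix (Fin (n (K + 1))) (Fin (n 0)) ℝ) (b' : Fin (n (K + 1)) → ℝ)
    (hrank : A'.rank ≤ (Finset.range (K + 2)).inf' (by simp) n)
    (hmin : ∃ ε > 0, ∀ (A : Matrix (Fin (n (K + 1))) (Fin (n 0)) ℝ)
        (b : Fin (n (K + 1)) → ℝ),
        A.rank ≤ (Finset.range (K + 2)).inf' (by simp) n →
        matNorm (A - A') + vecNorm (b - b') < ε →
        ℓ (fun i => A'.mulVec (x i) + b') ≤ ℓ (fun i => A.mulVec (x i) + b))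
    (hsub : sInf (Set.range
        (fun p : (∀ i : ℕ, Matrix (Fin (n (i + 1))) (Fin (n i)) ℝ) ×
                 (∀ i : ℕ, Fin (n (i + 1)) → ℝ) =>
          ℓ (fun i => mlp n p.1 p.2 K (x i)))) <
      ℓ (fun i => A'.mulVec (x i) + b')) :
    ∃ (W : ∀ i : ℕ, Matrix (Fin (n (i + 1))) (Fin (n i)) ℝ)
      (c : ∀ i : ℕ, Fin (n (i + 1)) → ℝ),
      (∃ δ > 0, ∀ (W' : ∀ i : ℕ, Matrix (Fin (n (i + 1))) (Fin (n i)) ℝ)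
        (c' : ∀ i : ℕ, Fin (n (i + 1)) → ℝ),
        paramDist n K W W' c c' < δ →
        ℓ (fun i => mlp n W c K (x i)) ≤ ℓ (fun i => mlp n W' c' K (x i))) ∧
      ℓ (fun i => mlp n W c K (x i)) = ℓ (fun i => A'.mulVec (x i) + b') ∧
      sInf (Set.range
        (fun p : (∀ i : ℕ, Matrix (Fin (n (i + 1))) (Fin (n i)) ℝ) ×
                 (∀ i : ℕ, Fin (n (i + 1)) → ℝ) =>
          ℓ (fun i => mlp n p.1 p.2 K (x i)))) <
        ℓ (fun i => mlp n W c K (x i)) := by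
  obtain ⟨ε, hε, hmin⟩ := hmin
  obtain ⟨W, c, hW, hc, hactive⟩ := exists_allActive_collapsed_eq x A' b' fun i hi =>
    hrank.trans (Finset.inf'_le n (Finset.mem_range.2 (by omega)))
  have hval : ℓ (fun i => mlp n W c K (x i)) = ℓ (fun i => A' *ᵥ x i + b') := by
    simp only [mlp_eq_collapsed (hactive _), hW, hc]
  refine ⟨W, c, exists_paramDist_lt_of_eventually ?_, hval, hval ▸ hsub⟩
  have hA := fun i (hi : i ≤ K) => tendsto_weight_paramNhds (W := W) (c := c) hi
  have hb := fun i (hi : i ≤ K) => tendsto_bias_paramNhds (W := W) (c := c) hi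
  filter_upwards [eventually_all.2 fun i => eventually_allActive hA hb (hactive i),
    eventually_matNorm_add_vecNorm_lt (hW ▸ tendsto_collapsedWeight K hA)
      (hc ▸ tendsto_collapsedBias K hA hb) hε] with p hp hnear
  rw [hval, funext fun i => mlp_eq_collapsed (hp i)]
  exact hmin _ _ (Finset.le_inf' _ _ fun i hi =>
    rank_collapsedWeight_le p.1 K i (Finset.mem_range_succ_iff.1 hi)) hnear
end
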